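/- Let f = (f_1,…,f_n) be polynomials in R[x] with each deg f_i ≥ 1, let δ_f = Σ_{i=1}^n (deg f_i − 1), and let F ∈ R[x] with deg F ≤ d. Let ∇f_i(x,y) be monotonous difference derivatives of the f_i and let ∇F(x,y) be a difference derivative of F all of whose components have total degree ≤ d − 1. Then the polynomial R(x,y) = det‖∇f(x,y) ∇F(x,y); f(x) F(x)‖ has total degree ≤ δ_f + d. -/

import Mathlib

open MvPolynomial Finset

noncomputable section

variable {R : Type*} [CommRing R] {n : ℕ}

/-- Total degree of a multivariate polynomial, valued in `WithBot ℤ`,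
with the convention `deg 0 = ⊥` (i.e. `-∞`). -/
def mdeg {σ S : Type*} [CommSemiring S] (F : MvPolynomial σ S) : WithBot ℤ :=
  F.support.sup fun m => ((m.sum fun _ e => e : ℕ) : ℤ)

/-- The embedding `R[x] → R[x,y]`, `x_i ↦ x_i` (the x-variables are `Sum.inl`,
the y-variables are `Sum.inr`). -/
def toX : MvPolynomial (Fin n) R →ₐ[R] MvPolynomial (Fin n ⊕ Fin n) R :=
  rename Sum.inl

/-- The embedding `R[x] → R[x,y]`, `x_i ↦ y_i`. -/
def toY : MvPolynomial (Fin n) R →ₐ[R] MvPolynomial (Fin n ⊕ Fin n) R :=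
  rename Sum.inr

/-- `D = (∇¹F, …, ∇ⁿF)` is a difference derivative of `F`:
`∑ k, (x_k - y_k) * ∇ᵏF(x,y) = F(x) - F(y)`. -/
def IsDiffDeriv (F : MvPolynomial (Fin n) R)
    (D : Fin n → MvPolynomial (Fin n ⊕ Fin n) R) : Prop :=
  ∑ k : Fin n, (X (Sum.inl k) - X (Sum.inr k)) * D k = toX F - toY F

/-- A difference derivative of `F` is monotonous if each component has total degree
`≤ deg F - 1` (equivalently `deg (∇ᵏF) + 1 ≤ deg F` in `WithBot ℤ`). -/
def IsMonotonous (F : MvPolynomial (Fin n) R)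
    (D : Fin n → MvPolynomial (Fin n ⊕ Fin n) R) : Prop :=
  ∀ k, mdeg (D k) + 1 ≤ mdeg F

/-- `δ_f = ∑ᵢ (deg fᵢ - 1)`. -/
def deltaF (f : Fin n → MvPolynomial (Fin n) R) : ℤ :=
  ∑ i, (((f i).totalDegree : ℤ) - 1)

/-- `(f)^{≤ d}_x`: sums `∑ fᵢ gᵢ` with `deg fᵢ + deg gᵢ ≤ d` for every `i`. -/
def boundedSpan (f : Fin n → MvPolynomial (Fin n) R) (d : WithBot ℤ) :
    Set (MvPolynomial (Fin n) R) :=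
  {F | ∃ g : Fin n → MvPolynomial (Fin n) R,
    F = ∑ i, f i * g i ∧ ∀ i, mdeg (f i) + mdeg (g i) ≤ d}

/-- A linear functional `L` annuls a set `S` if it vanishes on it. -/
def Annuls (L : MvPolynomial (Fin n) R →ₗ[R] R) (S : Set (MvPolynomial (Fin n) R)) : Prop :=
  ∀ F ∈ S, L F = 0

/-- `L(y_*).P` : apply the functional `L` to the `y`-part of `P ∈ R[x,y]`,
i.e. if `P = ∑_α A_α(x) y^α` then `L(y_*).P = ∑_α L(y^α) • A_α(x)`. -/
def applyY (L : MvPolynomial (Fin n) R →ₗ[R] R) (P : MvPolynomial (Fin n ⊕ Fin n) R) :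
    MvPolynomial (Fin n) R :=
  ∑ m ∈ P.support,
    C (L (monomial (Finsupp.sumFinsuppAddEquivProdFinsupp m).2 (1 : R)) * P.coeff m) *
      monomial (Finsupp.sumFinsuppAddEquivProdFinsupp m).1 (1 : R)

/-- `det‖∇f(x,y) ∇F(x,y); f(x) F(x)‖` : the `(n+1) × (n+1)` determinant whose entry `(k,i)`
is `∇ᵏfᵢ(x,y)` for `k, i ≤ n`, entry `(k, n+1)` is `∇ᵏF(x,y)`, entry `(n+1, i)` is `fᵢ(x)`,
and entry `(n+1, n+1)` is `F(x)`.  Here `Df i` is the tuple `(∇¹fᵢ, …, ∇ⁿfᵢ)`. -/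
def ddetX (f : Fin n → MvPolynomial (Fin n) R)
    (Df : Fin n → Fin n → MvPolynomial (Fin n ⊕ Fin n) R)
    (F : MvPolynomial (Fin n) R) (DF : Fin n → MvPolynomial (Fin n ⊕ Fin n) R) :
    MvPolynomial (Fin n ⊕ Fin n) R :=
  Matrix.det (Matrix.of fun k i : Fin (n + 1) =>
    if hk : (k : ℕ) < n then
      if hi : (i : ℕ) < n then Df ⟨i, hi⟩ ⟨k, hk⟩ else DF ⟨k, hk⟩
    else
      if hi : (i : ℕ) < n then toX (f ⟨i, hi⟩) else toX F)

/-- `det‖∇f(x,y) ∇F(x,y); f(y) F(y)‖` : as `ddetX` but with last row `(f₁(y),…,fₙ(y),F(y))`. -/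
def ddetY (f : Fin n → MvPolynomial (Fin n) R)
    (Df : Fin n → Fin n → MvPolynomial (Fin n ⊕ Fin n) R)
    (F : MvPolynomial (Fin n) R) (DF : Fin n → MvPolynomial (Fin n ⊕ Fin n) R) :
    MvPolynomial (Fin n ⊕ Fin n) R :=
  Matrix.det (Matrix.of fun k i : Fin (n + 1) =>
    if hk : (k : ℕ) < n then
      if hi : (i : ℕ) < n then Df ⟨i, hi⟩ ⟨k, hk⟩ else DF ⟨k, hk⟩
    else
      if hi : (i : ℕ) < n then toY (f ⟨i, hi⟩) else toY F)

/-!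
Weight row `k` of the matrix by `r k` (`0` for the rows of difference derivatives, `1` for the
last row) and column `i` by `c i` (`deg fᵢ - 1`, resp. `d - 1` for the last column). Monotonicity
and the degree hypotheses bound the degree of entry `(k, i)` by `r k + c i`, and every Leibniz term
of the determinant meets each row and each column exactly once, so its degree is at most
`∑ r + ∑ c = 1 + δ_f + (d - 1)`.
-/

section mdeg

variable {σ τ S : Type*} [CommSemiring S]

lemma mdeg_le_iff {p : MvPolynomial σ S} {b : WithBot ℤ} :
    mdeg p ≤ b ↔ ∀ m ∈ p.support, (((m.sum fun _ e => e : ℕ) : ℤ) : WithBot ℤ) ≤ b :=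
  Finset.sup_le_iff

@[simp]
lemma mdeg_zero : mdeg (0 : MvPolynomial σ S) = ⊥ := rfl

lemma mdeg_le_totalDegree (p : MvPolynomial σ S) : mdeg p ≤ ((p.totalDegree : ℤ) : WithBot ℤ) :=
  mdeg_le_iff.2 fun _ hm => by exact_mod_cast le_totalDegree hm

lemma mdeg_eq_totalDegree {p : MvPolynomial σ S} (hp : p ≠ 0) :
    mdeg p = ((p.totalDegree : ℤ) : WithBot ℤ) := by
  refine le_antisymm (mdeg_le_totalDegree p) ?_
  obtain ⟨m, hm, hmax⟩ := Finset.exists_mem_eq_sup p.support (support_nonempty.2 hp)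
    fun m => m.sum fun _ e => e
  rw [totalDegree, hmax]
  exact Finset.le_sup (f := fun m => (((m.sum fun _ e => e : ℕ) : ℤ) : WithBot ℤ)) hm

lemma mdeg_mul_le (p q : MvPolynomial σ S) : mdeg (p * q) ≤ mdeg p + mdeg q := by
  rcases eq_or_ne p 0 with rfl | hp
  · simp
  rcases eq_or_ne q 0 with rfl | hq
  · simp
  rw [mdeg_eq_totalDegree hp, mdeg_eq_totalDegree hq]
  refine (mdeg_le_totalDegree _).trans ?_
  exact_mod_cast totalDegree_mul p q

lemma mdeg_prod_le {ι : Type*} (s : Finset ι) (p : ι → MvPolynomial σ S) :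
    mdeg (∏ i ∈ s, p i) ≤ ∑ i ∈ s, mdeg (p i) := by
  classical
  induction s using Finset.induction_on with
  | empty => simpa using mdeg_le_totalDegree (1 : MvPolynomial σ S)
  | insert a s ha ih =>
    rw [Finset.prod_insert ha, Finset.sum_insert ha]
    exact (mdeg_mul_le _ _).trans (add_le_add le_rfl ih)

lemma mdeg_sum_le {ι : Type*} (s : Finset ι) (p : ι → MvPolynomial σ S) {b : WithBot ℤ}
    (h : ∀ i ∈ s, mdeg (p i) ≤ b) : mdeg (∑ i ∈ s, p i) ≤ b := by
  classical
  refine mdeg_le_iff.2 fun m hm => ?_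
  obtain ⟨i, hi, hm⟩ := Finset.mem_biUnion.1 (support_sum hm)
  exact mdeg_le_iff.1 (h i hi) m hm

lemma mdeg_smul_le {G : Type*} [SMulZeroClass G S] (a : G) (p : MvPolynomial σ S) :
    mdeg (a • p) ≤ mdeg p :=
  Finset.sup_mono support_smul

lemma mdeg_rename_le (g : σ → τ) (p : MvPolynomial σ S) : mdeg (rename g p) ≤ mdeg p := by
  rcases eq_or_ne p 0 with rfl | hp
  · simp
  rw [mdeg_eq_totalDegree hp]
  refine (mdeg_le_totalDegree _).trans ?_
  exact_mod_cast totalDegree_rename_le g p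

end mdeg

theorem mdeg_det_le {ι σ S : Type*} [Fintype ι] [DecidableEq ι] [CommRing S]
    (A : Matrix ι ι (MvPolynomial σ S)) (r c : ι → ℤ)
    (hA : ∀ k i, mdeg (A k i) ≤ ((r k + c i : ℤ) : WithBot ℤ)) :
    mdeg A.det ≤ ((∑ k, r k + ∑ i, c i : ℤ) : WithBot ℤ) := by
  rw [Matrix.det_apply]
  refine mdeg_sum_le _ _ fun π _ => (mdeg_smul_le _ _).trans <| (mdeg_prod_le _ _).trans ?_
  calc ∑ i, mdeg (A (π i) i) ≤ ∑ i, (((r (π i) + c i : ℤ)) : WithBot ℤ) :=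
        Finset.sum_le_sum fun i _ => hA (π i) i
    _ = ((∑ k, r k + ∑ i, c i : ℤ) : WithBot ℤ) := by
        rw [← WithBot.coe_sum, Finset.sum_add_distrib, Equiv.sum_comp π r]

lemma WithBot.le_coe_sub_one_of_add_one_le {a : WithBot ℤ} {b : ℤ} (h : a + 1 ≤ b) :
    a ≤ ((b - 1 : ℤ) : WithBot ℤ) := by
  induction a using WithBot.recBotCoe with
  | bot => exact bot_le
  | coe a =>
    have : a + 1 ≤ b := by exact_mod_cast h
    exact_mod_cast (by omega : a ≤ b - 1)

lemma IsMonotonous.mdeg_le {F : MvPolynomial (Fin n) R}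
    {D : Fin n → MvPolynomial (Fin n ⊕ Fin n) R} (hD : IsMonotonous F D) (k : Fin n) :
    mdeg (D k) ≤ (((F.totalDegree : ℤ) - 1 : ℤ) : WithBot ℤ) :=
  WithBot.le_coe_sub_one_of_add_one_le ((hD k).trans (mdeg_le_totalDegree F))

theorem ddetX_mdeg_le_general {R : Type*} [CommRing R] {n : ℕ}
    (f : Fin n → MvPolynomial (Fin n) R)
    (Df : Fin n → Fin n → MvPolynomial (Fin n ⊕ Fin n) R)
    (hDf : ∀ i, IsDiffDeriv (f i) (Df i) ∧ IsMonotonous (f i) (Df i))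
    (d : ℤ) (F : MvPolynomial (Fin n) R) (hF : mdeg F ≤ (d : WithBot ℤ))
    (DF : Fin n → MvPolynomial (Fin n ⊕ Fin n) R)
    (hDFdeg : ∀ k, mdeg (DF k) ≤ ((d - 1 : ℤ) : WithBot ℤ)) :
    mdeg (ddetX f Df F DF) ≤ ((deltaF f + d : ℤ) : WithBot ℤ) := by
  let r : Fin (n + 1) → ℤ := Fin.lastCases 1 fun _ => 0
  let c : Fin (n + 1) → ℤ := Fin.lastCases (d - 1) fun i => (f i).totalDegree - 1
  have hr : ∑ k, r k = 1 := by simp [r, Fin.sum_univ_castSucc]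
  have hc : ∑ i, c i = deltaF f + (d - 1) := by
    simp [c, Fin.sum_univ_castSucc, deltaF, add_comm]
  rw [ddetX]
  refine (mdeg_det_le _ r c fun k i => ?_).trans (by rw [hr, hc]; norm_cast; omega)
  induction k using Fin.lastCases <;> induction i using Fin.lastCases <;>
    simp only [r, c, Matrix.of_apply, Fin.lastCases_last, Fin.lastCases_castSucc, Fin.val_castSucc,
      Fin.val_last, Fin.is_lt, lt_irrefl, dite_true, dite_false, Fin.eta, zero_add, add_sub_cancel]
  case last.last => exact (mdeg_rename_le _ _).trans hF
  case last.cast => exact (mdeg_rename_le _ _).trans (mdeg_le_totalDegree _)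
  case cast.last => exact hDFdeg _
  case cast.cast => exact (hDf _).2.mdeg_le _

/-- the determinant `R(x,y) = det‖∇f ∇F; f(x) F(x)‖` has degree
`≤ δ_f + d`. -/
theorem ddetX_mdeg_le {R : Type*} [CommRing R] {n : ℕ}
    (f : Fin n → MvPolynomial (Fin n) R) (hf : ∀ i, (1 : WithBot ℤ) ≤ mdeg (f i))
    (Df : Fin n → Fin n → MvPolynomial (Fin n ⊕ Fin n) R)
    (hDf : ∀ i, IsDiffDeriv (f i) (Df i) ∧ IsMonotonous (f i) (Df i))
    (d : ℤ) (F : MvPolynomial (Fin n) R) (hF : mdeg F ≤ (d : WithBot ℤ))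
    (DF : Fin n → MvPolynomial (Fin n ⊕ Fin n) R)
    (hDF : IsDiffDeriv F DF) (hDFdeg : ∀ k, mdeg (DF k) ≤ ((d - 1 : ℤ) : WithBot ℤ)) :
    mdeg (ddetX f Df F DF) ≤ ((deltaF f + d : ℤ) : WithBot ℤ) :=
  ddetX_mdeg_le_general f Df hDf d F hF DF hDFdeg
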